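/- arXiv:math/9908169 — 5 statements merged into one kernel-verified Lean document; each statement's English description precedes it below -/
import Mathlib

section
/- For every real number c > 0 there exists a bounded invertible operator 𝒰 on the Hilbert space H := ℓ²(ℤ,ℂ) ⊕₂ ℓ²(ℤ,ℂ) which is J-unitary for J(x,y) = (y,x) (i.e. 𝒰* J 𝒰 = J = 𝒰 J 𝒰*), such that S₊(c⁻¹𝒰) = {0} and S₊(c⁻¹𝒰⁻¹) = {0}; explicitly: the only x ∈ H such that for every a > 1 there exists C ≥ 0 with ‖𝒰^N x‖ ≤ C·(c·a)^N for all N ∈ ℕ is x = 0, and likewise with 𝒰⁻¹ in place of 𝒰. -/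
noncomputable section
open ContinuousLinearMap

/-- The Hilbert space `ℓ²(ℤ, ℂ)` of square-summable two-sided complex sequences. -/
abbrev l2 : Type := lp (fun _ : ℤ => ℂ) 2

/-- The Hilbert direct sum `ℓ²(ℤ,ℂ) ⊕₂ ℓ²(ℤ,ℂ)`. -/
abbrev Hl : Type := WithLp 2 (l2 × l2)

/-- The continuous linear equivalence between `Hl` and `l2 × l2`. -/
def e : Hl ≃L[ℂ] l2 × l2 := WithLp.prodContinuousLinearEquiv 2 ℂ l2 l2

/-- The operator `J : (x, y) ↦ (y, x)` on `ℓ²(ℤ,ℂ) ⊕₂ ℓ²(ℤ,ℂ)`. -/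
def Jop : Hl →L[ℂ] Hl :=
  ((e.symm : l2 × l2 →L[ℂ] Hl).comp
    ((ContinuousLinearMap.snd ℂ l2 l2).prod (ContinuousLinearMap.fst ℂ l2 l2))).comp
    (e : Hl →L[ℂ] l2 × l2)

/-!
The operator is `U = A ⊕ (A⁻¹)*` for a weighted shift `(A f) n = e^{φ n - φ (n - 1)} f (n - 1)`,
formally `e^φ S e^{-φ}` with `S` the unit shift; its weights are bounded because `φ` is Lipschitz.
For any invertible `A` the operator `A ⊕ (A⁻¹)*` is `J`-unitary with inverse `A⁻¹ ⊕ A*`, and the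
four operators `A`, `(A⁻¹)*`, `A⁻¹`, `A*` are again weighted shifts, with potentials `±φ` and
steps `±1`, so `(Tᴺ f) (b - N d) = e^{±(φ (b - N d) - φ b)} f b`.

We take `φ = 5 log (c + 1) · σ` with `σ` an even `1`-Lipschitz zigzag whose slope is `(-1)^j` on
`[4^j, 4^(j+1))`. Over the window from `b` to `4^(j+1)` (for `4^j ≥ |b|`) the increment of `σ` has
the sign `(-1)^j` and at least a fifth of the window's length as size. So for each of the four
operators `T` and each `b` with `f b ≠ 0` there are arbitrarily large `N` with
`‖Tᴺ f‖ ≥ (c + 1)ᴺ ‖f b‖`, which no nonzero vector of `S₊(c⁻¹T)` can satisfy.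
-/

open Filter
open scoped InnerProductSpace ENNReal NNReal

theorem Memℓp.comp_equiv {α β E : Type*} [NormedAddCommGroup E] {p : ℝ≥0∞} {f : α → E}
    (hf : Memℓp f p) (σ : β ≃ α) : Memℓp (f ∘ σ) p := by
  rcases p.trichotomy with rfl | rfl | hp
  · rw [memℓp_zero_iff] at hf ⊢
    exact hf.preimage σ.injective.injOn
  · rw [memℓp_infty_iff] at hf ⊢
    convert hf using 1
    exact σ.surjective.range_comp fun i => ‖f i‖
  · exact memℓp_gen (σ.summable_iff.2 (hf.summable hp))

namespace lp

variable (𝕜 : Type*) {α β E : Type*} [RCLike 𝕜] [NormedAddCommGroup E] [InnerProductSpace 𝕜 E]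

def reindex (σ : β ≃ α) : lp (fun _ : α => E) 2 ≃ₗᵢ[𝕜] lp (fun _ : β => E) 2 :=
  LinearEquiv.isometryOfInner
    { toFun f := ⟨f ∘ σ, (lp.memℓp f).comp_equiv σ⟩
      invFun g := ⟨g ∘ σ.symm, (lp.memℓp g).comp_equiv σ.symm⟩
      map_add' _ _ := rfl
      map_smul' _ _ := rfl
      left_inv f := lp.ext (funext fun i => by simp)
      right_inv g := lp.ext (funext fun i => by simp) }
    fun f g => by
      simp only [lp.inner_eq_tsum]
      exact σ.tsum_eq fun i => ⟪f i, g i⟫_𝕜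

@[simp]
theorem reindex_apply (σ : β ≃ α) (f : lp (fun _ : α => E) 2) (i : β) :
    reindex 𝕜 σ f i = f (σ i) := rfl

end lp

section WeightedShift

variable {φ : ℤ → ℝ} {K : ℝ≥0}

theorem LipschitzWith.norm_exp_sub_le (hφ : LipschitzWith K φ) (n d : ℤ) :
    ‖(Real.exp (φ n - φ (n + d)) : ℂ)‖ ≤ Real.exp (K * |(d : ℝ)|) := by
  have h := hφ.dist_le_mul n (n + d)
  rw [Real.dist_eq, Int.dist_eq] at h
  push_cast at h
  rw [Complex.norm_real, Real.norm_of_nonneg (Real.exp_pos _).le, Real.exp_le_exp]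
  simp only [sub_add_cancel_left, abs_neg] at h
  exact (le_abs_self _).trans h

def weightedShift (hφ : LipschitzWith K φ) (d : ℤ) : l2 →L[ℂ] l2 :=
  lp.mapCLM 2 (fun n => (Real.exp (φ n - φ (n + d)) : ℂ) • ContinuousLinearMap.id ℂ ℂ)
      (Real.exp_pos _).le
      (fun n => (norm_smul_le _ _).trans <| by
        simpa using hφ.norm_exp_sub_le n d) ∘L
    (lp.reindex ℂ (Equiv.addRight d)).toContinuousLinearEquiv.toContinuousLinearMap

theorem weightedShift_apply (hφ : LipschitzWith K φ) (d : ℤ) (f : l2) (n : ℤ) :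
    weightedShift hφ d f n = Real.exp (φ n - φ (n + d)) * f (n + d) := by
  simp [weightedShift]

theorem weightedShift_pow_apply (hφ : LipschitzWith K φ) (d : ℤ) (N : ℕ) (f : l2) (n : ℤ) :
    (weightedShift hφ d ^ N) f n = Real.exp (φ n - φ (n + N * d)) * f (n + N * d) := by
  induction N generalizing f with
  | zero => simp
  | succ N ih =>
    rw [pow_succ, mul_apply_eq_comp, ih, weightedShift_apply, ← mul_assoc,
      ← Complex.ofReal_mul, ← Real.exp_add]
    push_cast
    ring_nf

theorem weightedShift_comp_neg (hφ : LipschitzWith K φ) (d : ℤ) :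
    weightedShift hφ d ∘L weightedShift hφ (-d) = 1 := by
  ext f n
  rw [ContinuousLinearMap.comp_apply, weightedShift_apply, weightedShift_apply, ← mul_assoc,
    ← Complex.ofReal_mul, ← Real.exp_add]
  simp

theorem adjoint_weightedShift (hφ : LipschitzWith K φ) (d : ℤ) :
    adjoint (weightedShift hφ d) = weightedShift hφ.neg (-d) := by
  refine ((eq_adjoint_iff _ _).2 fun f g => ?_).symm
  simp only [lp.inner_eq_tsum, weightedShift_apply, Pi.neg_apply]
  refine ((Equiv.addRight d).tsum_eq _).symm.trans (tsum_congr fun n => ?_)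
  simp only [Equiv.coe_addRight, add_neg_cancel_right, RCLike.inner_apply, map_mul,
    Complex.conj_ofReal]
  rw [show -φ (n + d) - -φ n = φ n - φ (n + d) by ring]
  ring

theorem exp_mul_norm_le_norm_weightedShift_pow (hφ : LipschitzWith K φ) (d : ℤ) (N : ℕ)
    (f : l2) (b : ℤ) :
    Real.exp (φ (b - N * d) - φ b) * ‖f b‖ ≤ ‖(weightedShift hφ d ^ N) f‖ := by
  have h := lp.norm_apply_le_norm two_ne_zero ((weightedShift hφ d ^ N) f) (b - N * d)
  rwa [weightedShift_pow_apply, sub_add_cancel, norm_mul, Complex.norm_real,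
    Real.norm_of_nonneg (Real.exp_pos _).le] at h

end WeightedShift

def zigzag (n : ℤ) : ℤ := ∑ i ∈ Finset.range n.natAbs, (-1) ^ Nat.log 4 i

theorem zigzag_natCast (t : ℕ) : zigzag t = ∑ i ∈ Finset.range t, (-1) ^ Nat.log 4 i := rfl

theorem zigzag_neg (n : ℤ) : zigzag (-n) = zigzag n := by
  simp [zigzag]

theorem abs_zigzag_natCast_sub_le (a b : ℕ) : |zigzag b - zigzag a| ≤ |(b : ℤ) - a| := by
  wlog hab : a ≤ b generalizing a b
  · rw [abs_sub_comm, abs_sub_comm (b : ℤ)]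
    exact this b a (by omega)
  rw [zigzag_natCast, zigzag_natCast, ← Finset.sum_Ico_eq_sub _ hab]
  calc |∑ i ∈ Finset.Ico a b, ((-1 : ℤ) ^ Nat.log 4 i)|
      ≤ ∑ i ∈ Finset.Ico a b, |(-1 : ℤ) ^ Nat.log 4 i| := Finset.abs_sum_le_sum_abs _ _
    _ = |(b : ℤ) - a| := by
      simp [abs_of_nonneg (sub_nonneg.2 (Int.ofNat_le.2 hab)), Nat.cast_sub hab]

theorem abs_zigzag_sub_le (x y : ℤ) : |zigzag x - zigzag y| ≤ |x - y| := by
  calc |zigzag x - zigzag y| = |zigzag (x.natAbs : ℤ) - zigzag (y.natAbs : ℤ)| := rfl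
    _ ≤ |(x.natAbs : ℤ) - y.natAbs| := abs_zigzag_natCast_sub_le _ _
    _ ≤ |x - y| := by
        simpa only [Int.natCast_natAbs] using abs_abs_sub_abs_le_abs_sub x y

theorem abs_zigzag_le (n : ℤ) : |zigzag n| ≤ |n| := by
  simpa [zigzag] using abs_zigzag_sub_le n 0

theorem zigzag_pow_four_succ (j : ℕ) :
    zigzag (4 ^ (j + 1) : ℕ) = zigzag (4 ^ j : ℕ) + (-1) ^ j * (3 * 4 ^ j) := by
  have hle : 4 ^ j ≤ 4 ^ (j + 1) := Nat.pow_le_pow_right (by norm_num) (Nat.le_succ j)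
  rw [zigzag_natCast, zigzag_natCast, ← Finset.sum_range_add_sum_Ico _ hle,
    Finset.sum_congr (s₁ := Finset.Ico (4 ^ j) (4 ^ (j + 1))) rfl fun i hi => by
      rw [Nat.log_eq_of_pow_le_of_lt_pow (Finset.mem_Ico.1 hi).1 (Finset.mem_Ico.1 hi).2]]
  rw [Finset.sum_const, Nat.card_Ico, nsmul_eq_mul,
    show 4 ^ (j + 1) - 4 ^ j = 3 * 4 ^ j by rw [pow_succ]; omega]
  push_cast
  ring

theorem le_five_mul_zigzag_sub (b : ℤ) (j : ℕ) (hb : |b| ≤ 4 ^ j) :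
    4 ^ (j + 1) - b ≤ 5 * ((-1) ^ j * (zigzag (4 ^ (j + 1) : ℕ) - zigzag b)) := by
  have hsq : ((-1 : ℤ) ^ j) * (-1) ^ j = 1 := by rw [← mul_pow]; norm_num
  have hsign (z : ℤ) : |(-1) ^ j * z| = |z| := by rw [abs_mul, abs_neg_one_pow, one_mul]
  have h₁ := abs_le.1 ((hsign _).trans_le ((abs_zigzag_le (4 ^ j : ℕ)).trans_eq (Nat.abs_cast _)))
  have h₂ := abs_le.1 ((hsign _).trans_le ((abs_zigzag_le b).trans hb))
  have hb' := abs_le.1 hb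
  have hcast : ((4 ^ j : ℕ) : ℤ) = 4 ^ j := by push_cast; rfl
  rw [zigzag_pow_four_succ, mul_sub, mul_add, ← mul_assoc, hsq, pow_succ]
  linarith

theorem frequently_le_five_mul_zigzag_sub (b : ℤ) (i : ℕ) :
    ∃ᶠ N : ℕ in atTop, (N : ℤ) ≤ 5 * ((-1) ^ i * (zigzag (b + N) - zigzag b)) := by
  refine frequently_atTop.2 fun M => ?_
  -- `j` has the parity of `i`, and `4 ^ j ≥ M + |b|`
  set j := i + 2 * (M + b.natAbs)
  have hj : ((M + b.natAbs : ℕ) : ℤ) ≤ 4 ^ j := by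
    exact_mod_cast (Nat.lt_pow_self (by norm_num : 1 < 4)).le.trans' (by omega)
  push_cast at hj
  have hb : |b| ≤ 4 ^ j := by linarith [(M.cast_nonneg : (0 : ℤ) ≤ M)]
  have hN : (0 : ℤ) ≤ 4 ^ (j + 1) - b := by
    have := abs_le.1 hb; rw [pow_succ]; linarith
  refine ⟨(4 ^ (j + 1) - b).toNat, ?_, ?_⟩
  · zify
    rw [Int.toNat_of_nonneg hN, pow_succ]
    linarith [le_abs_self b, pow_nonneg (by norm_num : (0 : ℤ) ≤ 4) j]
  · have hsign : ((-1 : ℤ) ^ i) = (-1) ^ j := by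
      rw [pow_add, pow_mul, neg_one_sq, one_pow, mul_one]
    rw [Int.toNat_of_nonneg hN, hsign, add_sub_cancel,
      show (4 : ℤ) ^ (j + 1) = (4 ^ (j + 1) : ℕ) by push_cast; rfl]
    exact_mod_cast le_five_mul_zigzag_sub b j hb

def zigzagPotential (ν : ℝ) (n : ℤ) : ℝ := 5 * Real.log ν * zigzag n

theorem lipschitzWith_zigzagPotential (ν : ℝ) :
    LipschitzWith ‖5 * Real.log ν‖₊ (zigzagPotential ν) := by
  refine LipschitzWith.of_dist_le_mul fun x y => ?_
  rw [Real.dist_eq, Int.dist_eq, zigzagPotential, zigzagPotential, ← mul_sub, abs_mul,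
    coe_nnnorm, Real.norm_eq_abs]
  exact mul_le_mul_of_nonneg_left (by exact_mod_cast abs_zigzag_sub_le x y) (abs_nonneg _)

theorem frequently_mul_log_le_zigzagPotential {ν : ℝ} (hν : 1 ≤ ν) {φ : ℤ → ℝ}
    (hφ : φ = zigzagPotential ν ∨ φ = -zigzagPotential ν) {d : ℤ} (hd : d = 1 ∨ d = -1)
    (b : ℤ) : ∃ᶠ N : ℕ in atTop, N * Real.log ν ≤ φ (b - N * d) - φ b := by
  obtain ⟨i, hi⟩ : ∃ i : ℕ, ∀ n, φ n = (-1) ^ i * zigzagPotential ν n := by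
    rcases hφ with rfl | rfl
    exacts [⟨0, by simp⟩, ⟨1, by simp⟩]
  -- a backward window from `b` is a forward window from `-b`, since `zigzag` is even
  obtain ⟨b', hb'⟩ : ∃ b' : ℤ, ∀ N : ℕ,
      zigzag (b - N * d) = zigzag (b' + N) ∧ zigzag b = zigzag b' := by
    rcases hd with rfl | rfl
    · exact ⟨-b, fun N => ⟨by rw [← zigzag_neg]; ring_nf, (zigzag_neg b).symm⟩⟩
    · exact ⟨b, fun N => ⟨by ring_nf, rfl⟩⟩
  refine (frequently_le_five_mul_zigzag_sub b' i).mono fun N hN => ?_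
  have hN' : (N : ℝ) ≤ 5 * ((-1) ^ i * (zigzag (b' + N) - zigzag b')) := by exact_mod_cast hN
  have hlog := Real.log_nonneg hν
  rw [hi, hi, zigzagPotential, zigzagPotential, (hb' N).1, (hb' N).2]
  nlinarith

section SPlus

variable {𝕜 E : Type*} [NontriviallyNormedField 𝕜] [NormedAddCommGroup E] [NormedSpace 𝕜 E]

/-- The space `S₊(c⁻¹T)` of the paper. -/
def sPlus (c : ℝ) (T : E →L[𝕜] E) : Set E :=
  {x | ∀ a : ℝ, 1 < a → ∃ C : ℝ, 0 ≤ C ∧ ∀ N : ℕ, ‖(T ^ N) x‖ ≤ C * (c * a) ^ N}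

theorem not_mem_sPlus_of_frequently_le {c ν r : ℝ} {T : E →L[𝕜] E} {x : E} (hc : 0 < c)
    (hcν : c < ν) (hr : 0 < r) (h : ∃ᶠ N : ℕ in atTop, r * ν ^ N ≤ ‖(T ^ N) x‖) :
    x ∉ sPlus c T := by
  intro hx
  obtain ⟨C, -, hC⟩ := hx ((c + ν) / (2 * c)) (by rw [one_lt_div (by positivity)]; linarith)
  have hν : 0 < ν := hc.trans hcν
  have hq : c * ((c + ν) / (2 * c)) = (c + ν) / 2 := by field_simp
  have hsmall : ∀ᶠ N : ℕ in atTop, C * ((c + ν) / 2 / ν) ^ N < r := by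
    have hlt : (c + ν) / 2 / ν < 1 := by rw [div_lt_one hν]; linarith
    have := (tendsto_pow_atTop_nhds_zero_of_lt_one (by positivity) hlt).const_mul C
    rw [mul_zero] at this
    exact this.eventually_lt_const hr
  obtain ⟨N, hN, hNsmall⟩ := (h.and_eventually hsmall).exists
  rw [div_pow, mul_div_assoc', div_lt_iff₀ (by positivity)] at hNsmall
  have hbound := hC N
  rw [hq] at hbound
  linarith

theorem mem_sPlus_of_norm_pow_le {F : Type*} [NormedAddCommGroup F] [NormedSpace 𝕜 F] {c : ℝ}
    {T : E →L[𝕜] E} {S : F →L[𝕜] F} {x : E} {y : F} (hle : ∀ N : ℕ, ‖(S ^ N) y‖ ≤ ‖(T ^ N) x‖)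
    (hx : x ∈ sPlus c T) : y ∈ sPlus c S :=
  fun a ha => (hx a ha).imp fun _ => And.imp_right fun h N => (hle N).trans (h N)

end SPlus

theorem sPlus_weightedShift_subset {φ : ℤ → ℝ} {K : ℝ≥0} (hφ : LipschitzWith K φ) (d : ℤ)
    {c ν : ℝ} (hc : 0 < c) (hcν : c < ν)
    (hgain : ∀ b : ℤ, ∃ᶠ N : ℕ in atTop, N * Real.log ν ≤ φ (b - N * d) - φ b) :
    sPlus c (weightedShift hφ d) ⊆ {0} := by
  intro f hf
  by_contra hf0
  obtain ⟨b, hb⟩ : ∃ b, f b ≠ 0 := by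
    by_contra! h
    exact hf0 (lp.ext (funext h))
  refine not_mem_sPlus_of_frequently_le hc hcν (norm_pos_iff.2 hb)
    ((hgain b).mono fun N hN => ?_) hf
  calc ‖f b‖ * ν ^ N = Real.exp (N * Real.log ν) * ‖f b‖ := by
        rw [Real.exp_nat_mul, Real.exp_log (hc.trans hcν), mul_comm]
    _ ≤ Real.exp (φ (b - N * d) - φ b) * ‖f b‖ := by gcongr
    _ ≤ ‖(weightedShift hφ d ^ N) f‖ := exp_mul_norm_le_norm_weightedShift_pow hφ d N f b

section BlockDiag

variable {𝕜 E F : Type*} [NontriviallyNormedField 𝕜] [NormedAddCommGroup E] [NormedSpace 𝕜 E]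
  [NormedAddCommGroup F] [NormedSpace 𝕜 F]

def blockDiag (T : E →L[𝕜] E) (S : F →L[𝕜] F) : WithLp 2 (E × F) →L[𝕜] WithLp 2 (E × F) :=
  (WithLp.prodContinuousLinearEquiv 2 𝕜 E F).symm.toContinuousLinearMap ∘L T.prodMap S ∘L
    (WithLp.prodContinuousLinearEquiv 2 𝕜 E F).toContinuousLinearMap

@[simp]
theorem blockDiag_apply (T : E →L[𝕜] E) (S : F →L[𝕜] F) (x : WithLp 2 (E × F)) :
    blockDiag T S x = WithLp.toLp 2 (T x.fst, S x.snd) := rfl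

theorem blockDiag_comp (T T' : E →L[𝕜] E) (S S' : F →L[𝕜] F) :
    blockDiag T S ∘L blockDiag T' S' = blockDiag (T ∘L T') (S ∘L S') := rfl

theorem blockDiag_one : blockDiag (1 : E →L[𝕜] E) (1 : F →L[𝕜] F) = 1 := rfl

theorem blockDiag_pow (T : E →L[𝕜] E) (S : F →L[𝕜] F) (N : ℕ) :
    blockDiag T S ^ N = blockDiag (T ^ N) (S ^ N) := by
  induction N with
  | zero => exact blockDiag_one.symm
  | succ N ih => rw [pow_succ, pow_succ, pow_succ, ih]; rfl

theorem sPlus_blockDiag_subset {c : ℝ} {T : E →L[𝕜] E} {S : F →L[𝕜] F}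
    (hT : sPlus c T ⊆ {0}) (hS : sPlus c S ⊆ {0}) : sPlus c (blockDiag T S) ⊆ {0} := by
  intro x hx
  have hfst : x.fst ∈ sPlus c T := mem_sPlus_of_norm_pow_le (fun N => by
    rw [blockDiag_pow]; exact WithLp.norm_fst_le (x := blockDiag (T ^ N) (S ^ N) x)) hx
  have hsnd : x.snd ∈ sPlus c S := mem_sPlus_of_norm_pow_le (fun N => by
    rw [blockDiag_pow]; exact WithLp.norm_snd_le (x := blockDiag (T ^ N) (S ^ N) x)) hx
  exact (WithLp.ext_iff 2).2 (Prod.ext (hT hfst) (hS hsnd))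

end BlockDiag

theorem adjoint_blockDiag {𝕜 E F : Type*} [RCLike 𝕜] [NormedAddCommGroup E]
    [InnerProductSpace 𝕜 E] [CompleteSpace E] [NormedAddCommGroup F] [InnerProductSpace 𝕜 F]
    [CompleteSpace F] (T : E →L[𝕜] E) (S : F →L[𝕜] F) :
    adjoint (blockDiag T S) = blockDiag (adjoint T) (adjoint S) := by
  refine ((eq_adjoint_iff _ _).2 fun x y => ?_).symm
  simp [WithLp.prod_inner_apply, adjoint_inner_left]

def IsJUnitary (U : Hl →L[ℂ] Hl) : Prop :=
  adjoint U ∘L (Jop ∘L U) = Jop ∧ U ∘L (Jop ∘L adjoint U) = Jop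

theorem Jop_comp_blockDiag (T S : l2 →L[ℂ] l2) : Jop ∘L blockDiag T S = blockDiag S T ∘L Jop :=
  rfl

section InvertiblePair

variable {A B : l2 →L[ℂ] l2}

theorem blockDiag_comp_blockDiag_adjoint (hAB : A ∘L B = 1) :
    blockDiag A (adjoint B) ∘L blockDiag B (adjoint A) = 1 := by
  rw [blockDiag_comp, ← adjoint_comp, hAB, adjoint_one, blockDiag_one]

theorem isJUnitary_blockDiag (hAB : A ∘L B = 1) (hBA : B ∘L A = 1) :
    IsJUnitary (blockDiag A (adjoint B)) := by
  constructor
  · rw [adjoint_blockDiag, adjoint_adjoint, Jop_comp_blockDiag, ← comp_assoc, blockDiag_comp,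
      ← adjoint_comp, hBA, adjoint_one, blockDiag_one, one_def, id_comp]
  · rw [adjoint_blockDiag, adjoint_adjoint, Jop_comp_blockDiag, ← comp_assoc, blockDiag_comp,
      ← adjoint_comp, hAB, adjoint_one, blockDiag_one, one_def, id_comp]

end InvertiblePair

/-- For every `c > 0` there is a bounded invertible `J`-unitary operator `𝒰` on
`ℓ²(ℤ,ℂ) ⊕₂ ℓ²(ℤ,ℂ)` with `S₊(c⁻¹𝒰) = {0} = S₊(c⁻¹𝒰⁻¹)`. -/
theorem stmt6 (c : ℝ) (hc : 0 < c) :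
    ∃ U Uinv : Hl →L[ℂ] Hl,
      U.comp Uinv = 1 ∧ Uinv.comp U = 1 ∧
      (adjoint U).comp (Jop.comp U) = Jop ∧
      U.comp (Jop.comp (adjoint U)) = Jop ∧
      (∀ x : Hl,
        (∀ a : ℝ, 1 < a → ∃ C : ℝ, 0 ≤ C ∧ ∀ N : ℕ, ‖(U ^ N) x‖ ≤ C * (c * a) ^ N) → x = 0) ∧
      (∀ x : Hl,
        (∀ a : ℝ, 1 < a → ∃ C : ℝ, 0 ≤ C ∧ ∀ N : ℕ, ‖(Uinv ^ N) x‖ ≤ C * (c * a) ^ N) →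
          x = 0) := by
  have hν : 1 ≤ c + 1 := by linarith
  have hL := lipschitzWith_zigzagPotential (c + 1)
  have hAB := weightedShift_comp_neg hL (-1)
  have hBA := weightedShift_comp_neg hL 1
  rw [neg_neg] at hAB
  have hslow {φ : ℤ → ℝ} {K : ℝ≥0} (hφ : LipschitzWith K φ) (d : ℤ)
      (hφ' : φ = zigzagPotential (c + 1) ∨ φ = -zigzagPotential (c + 1)) (hd : d = 1 ∨ d = -1) :
      sPlus c (weightedShift hφ d) ⊆ {0} :=
    sPlus_weightedShift_subset hφ d hc (lt_add_one c)
      (frequently_mul_log_le_zigzagPotential hν hφ' hd)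
  refine ⟨blockDiag (weightedShift hL (-1)) (adjoint (weightedShift hL 1)),
    blockDiag (weightedShift hL 1) (adjoint (weightedShift hL (-1))),
    blockDiag_comp_blockDiag_adjoint hAB, blockDiag_comp_blockDiag_adjoint hBA,
    (isJUnitary_blockDiag hAB hBA).1, (isJUnitary_blockDiag hAB hBA).2, ?_, ?_⟩
  · rw [adjoint_weightedShift]
    exact sPlus_blockDiag_subset (hslow hL _ (.inl rfl) (.inr rfl))
      (hslow hL.neg _ (.inr rfl) (.inr rfl))
  · rw [adjoint_weightedShift]
    exact sPlus_blockDiag_subset (hslow hL _ (.inl rfl) (.inl rfl))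
      (hslow hL.neg _ (.inr rfl) (.inl (neg_neg 1)))
end
end

section
/- Fix c > 0 and set u_n := (c+2)^{|n|·sin((π/2)·log₂(1+|n|))} for n ∈ ℤ, and α := 1 + π/(2·ln 2). Then for every n ∈ ℤ one has (c+2)^{−α} ≤ u_{n+1}/u_n ≤ (c+2)^{α}. -/
noncomputable section
open Real

/-! Since `u n = (c+2) ^ f |n|` with `f x = x · sin((π/2)·log₂(1+x))` and `||n+1| - |n|| ≤ 1`, it
suffices that `|f a - f b| ≤ α` whenever `|a - b| ≤ 1`. Write
`f a - f b = (a - b) sin θ_a + b (sin θ_a - sin θ_b)`: the first term is at most `1`, and since `sin`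
is `1`-Lipschitz the second is at most `(π / (2 ln 2)) · b |ln(1+a) - ln(1+b)|`, where
`b |ln(1+a) - ln(1+b)| ≤ b |a - b| / min(1+a, 1+b) ≤ 1`. -/

theorem Real.log_sub_log_le_div {x y : ℝ} (hy : 0 < y) (hyx : y ≤ x) :
    log x - log y ≤ (x - y) / y := by
  have hx : 0 < x := hy.trans_le hyx
  calc log x - log y = log (x / y) := (log_div hx.ne' hy.ne').symm
    _ ≤ x / y - 1 := log_le_sub_one_of_pos (div_pos hx hy)
    _ = (x - y) / y := by field_simp

theorem Real.abs_log_sub_log_le {x y : ℝ} (hx : 0 < x) (hy : 0 < y) :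
    |log x - log y| ≤ |x - y| / min x y := by
  wlog hyx : y ≤ x generalizing x y
  · rw [abs_sub_comm, abs_sub_comm x, min_comm]
    exact this hy hx (le_of_not_ge hyx)
  rw [abs_of_nonneg (sub_nonneg.2 (log_le_log hy hyx)), abs_of_nonneg (sub_nonneg.2 hyx),
    min_eq_right hyx]
  exact log_sub_log_le_div hy hyx

theorem mul_abs_log_one_add_sub_le_one {a b : ℝ} (ha : 0 ≤ a) (hb : 0 ≤ b) (hab : |a - b| ≤ 1) :
    b * |log (1 + a) - log (1 + b)| ≤ 1 := by
  have hmin : b ≤ min (1 + a) (1 + b) :=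
    le_min (by linarith [(abs_le.1 hab).1]) (by linarith)
  have hmin_pos : 0 < min (1 + a) (1 + b) := lt_min (by linarith) (by linarith)
  calc b * |log (1 + a) - log (1 + b)|
      ≤ b * (|(1 + a) - (1 + b)| / min (1 + a) (1 + b)) :=
        mul_le_mul_of_nonneg_left (abs_log_sub_log_le (by linarith) (by linarith)) hb
    _ = b / min (1 + a) (1 + b) * |a - b| := by ring_nf
    _ ≤ 1 * 1 := mul_le_mul ((div_le_one hmin_pos).2 hmin) hab (abs_nonneg _) zero_le_one
    _ = 1 := one_mul 1

def weightExponent (x : ℝ) : ℝ := x * sin (π / 2 * logb 2 (1 + x))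

theorem abs_weightExponent_sub_le {a b : ℝ} (ha : 0 ≤ a) (hb : 0 ≤ b) (hab : |a - b| ≤ 1) :
    |weightExponent a - weightExponent b| ≤ 1 + π / (2 * log 2) := by
  set θa := π / 2 * logb 2 (1 + a)
  set θb := π / 2 * logb 2 (1 + b)
  have hlog2 : 0 < log 2 := log_pos one_lt_two
  have hθ : |θa - θb| = π / (2 * log 2) * |log (1 + a) - log (1 + b)| := by
    rw [← abs_of_pos (by positivity : 0 < π / (2 * log 2)), ← abs_mul]
    simp only [θa, θb, logb]
    field_simp
  have hfirst : |(a - b) * sin θa| ≤ 1 := by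
    rw [abs_mul]
    simpa using mul_le_mul hab (abs_sin_le_one θa) (abs_nonneg _) zero_le_one
  have hsecond : |b * (sin θa - sin θb)| ≤ π / (2 * log 2) :=
    calc |b * (sin θa - sin θb)| = b * |sin θa - sin θb| := by rw [abs_mul, abs_of_nonneg hb]
      _ ≤ b * |θa - θb| := mul_le_mul_of_nonneg_left (abs_sin_sub_sin_le θa θb) hb
      _ = π / (2 * log 2) * (b * |log (1 + a) - log (1 + b)|) := by rw [hθ]; ring
      _ ≤ π / (2 * log 2) * 1 :=
        mul_le_mul_of_nonneg_left (mul_abs_log_one_add_sub_le_one ha hb hab) (by positivity)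
      _ = π / (2 * log 2) := mul_one _
  calc |weightExponent a - weightExponent b| = |(a - b) * sin θa + b * (sin θa - sin θb)| := by
        unfold weightExponent; congr 1; ring
    _ ≤ |(a - b) * sin θa| + |b * (sin θa - sin θb)| := abs_add_le _ _
    _ ≤ 1 + π / (2 * log 2) := add_le_add hfirst hsecond

theorem Real.rpow_div_rpow_mem_Icc {B s t α : ℝ} (hB : 1 ≤ B) (hst : |s - t| ≤ α) :
    B ^ (-α) ≤ B ^ s / B ^ t ∧ B ^ s / B ^ t ≤ B ^ α := by
  rw [← rpow_sub (by linarith)]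
  obtain ⟨hlo, hhi⟩ := abs_le.1 hst
  exact ⟨rpow_le_rpow_of_exponent_le hB hlo, rpow_le_rpow_of_exponent_le hB hhi⟩

/-- For the weights `u n = (c+2) ^ (|n|·sin((π/2)·log₂(1+|n|)))` and `α = 1 + π/(2·ln 2)`,
one has `(c+2)^(-α) ≤ u (n+1) / u n ≤ (c+2)^α` for every `n ∈ ℤ`. -/
theorem stmt10 (c : ℝ) (hc : 0 < c)
    (u : ℤ → ℝ)
    (hu : ∀ n : ℤ,
      u n = (c + 2) ^ (|(n : ℝ)| * Real.sin (Real.pi / 2 * Real.logb 2 (1 + |(n : ℝ)|)))) :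
    ∀ n : ℤ,
      (c + 2) ^ (-(1 + Real.pi / (2 * Real.log 2))) ≤ u (n + 1) / u n ∧
      u (n + 1) / u n ≤ (c + 2) ^ (1 + Real.pi / (2 * Real.log 2)) := by
  intro n
  have hstep : |(|((n + 1 : ℤ) : ℝ)| - |(n : ℝ)|)| ≤ 1 := by
    simpa using abs_abs_sub_abs_le_abs_sub ((n + 1 : ℤ) : ℝ) (n : ℝ)
  rw [hu, hu]
  exact rpow_div_rpow_mem_Icc (by linarith)
    (abs_weightExponent_sub_le (abs_nonneg _) (abs_nonneg _) hstep)
end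
end

section
/- Fix c > 0 and set u_n := (c+2)^{|n|·sin((π/2)·log₂(1+|n|))} for n ∈ ℤ. For k ∈ ℕ set n_k := 2^{1+4k} − 1 and m_k := 2^{3+4k} − 1. Then u_{n_k} = u_{−n_k} = (c+2)^{n_k} and u_{m_k}⁻¹ = u_{−m_k}⁻¹ = (c+2)^{m_k} for all k ≥ 1. Consequently, there is no constant M' ≥ 0 such that u_N ≤ M'·(c+1)^N for all N ∈ ℕ; likewise there is no M' with u_N⁻¹ ≤ M'·(c+1)^N for all N ∈ ℕ, none with u_{−N} ≤ M'·(c+1)^N for all N ∈ ℕ, and none with u_{−N}⁻¹ ≤ M'·(c+1)^N for all N ∈ ℕ. -/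
/-! At `|x| = 2^j - 1` the phase `(π/2)·log₂(1+|x|)` equals `jπ/2`, so the exponent of the weight
is `±|x|` when `j ≡ 1, 3 (mod 4)`. Such `x` include arbitrarily large naturals, and there the
weight or its inverse is `(c+2)^N`, which outgrows every `M'·(c+1)^N`. -/

noncomputable section
open Real Filter

def oscWeight (b x : ℝ) : ℝ := b ^ (|x| * sin (π / 2 * logb 2 (1 + |x|)))

lemma oscWeight_neg (b x : ℝ) : oscWeight b (-x) = oscWeight b x := by
  simp only [oscWeight, abs_neg]

lemma abs_two_pow_sub_one (j : ℕ) : |(2 : ℝ) ^ j - 1| = 2 ^ j - 1 :=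
  abs_of_nonneg (sub_nonneg.2 (one_le_pow₀ one_le_two))

lemma oscWeight_two_pow_sub_one (b : ℝ) (j : ℕ) :
    oscWeight b (2 ^ j - 1) = b ^ ((2 ^ j - 1) * sin (π / 2 * j)) := by
  rw [oscWeight, abs_two_pow_sub_one, add_sub_cancel, logb_pow, logb_self_eq_one one_lt_two,
    mul_one]

lemma sin_pi_div_two_mul_one_add_four_mul (k : ℕ) :
    sin (π / 2 * ((1 + 4 * k : ℕ) : ℝ)) = 1 := by
  rw [show π / 2 * ((1 + 4 * k : ℕ) : ℝ) = π / 2 + k * (2 * π) by push_cast; ring,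
    sin_add_nat_mul_two_pi, sin_pi_div_two]

lemma sin_pi_div_two_mul_three_add_four_mul (k : ℕ) :
    sin (π / 2 * ((3 + 4 * k : ℕ) : ℝ)) = -1 := by
  rw [show π / 2 * ((3 + 4 * k : ℕ) : ℝ) = π / 2 + π + k * (2 * π) by push_cast; ring,
    sin_add_nat_mul_two_pi, sin_add_pi, sin_pi_div_two]

lemma oscWeight_peak (b : ℝ) (k : ℕ) :
    oscWeight b (2 ^ (1 + 4 * k) - 1) = b ^ ((2 : ℝ) ^ (1 + 4 * k) - 1) := by
  rw [oscWeight_two_pow_sub_one, sin_pi_div_two_mul_one_add_four_mul, mul_one]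

lemma inv_oscWeight_trough {b : ℝ} (hb : 0 ≤ b) (k : ℕ) :
    (oscWeight b (2 ^ (3 + 4 * k) - 1))⁻¹ = b ^ ((2 : ℝ) ^ (3 + 4 * k) - 1) := by
  rw [oscWeight_two_pow_sub_one, sin_pi_div_two_mul_three_add_four_mul, mul_neg_one,
    rpow_neg hb, inv_inv]

lemma frequently_natCast_two_pow_sub_one {p : ℝ → Prop} {j : ℕ → ℕ} (hj : ∀ n, n ≤ j n)
    (hp : ∀ n, p (2 ^ j n - 1)) : ∃ᶠ N : ℕ in atTop, p N := by
  refine frequently_atTop.2 fun n => ⟨2 ^ j n - 1, ?_, ?_⟩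
  · have := (Nat.lt_two_pow_self (n := n)).trans_le (Nat.pow_le_pow_right two_pos (hj n))
    omega
  · rw [Nat.cast_sub Nat.one_le_two_pow]
    exact_mod_cast hp n

lemma frequently_oscWeight_natCast_eq_pow (b : ℝ) :
    ∃ᶠ N : ℕ in atTop, oscWeight b N = b ^ N :=
  (frequently_natCast_two_pow_sub_one (p := fun x => oscWeight b x = b ^ x)
    (j := fun n => 1 + 4 * n) (fun n => by omega) fun n => oscWeight_peak b n).mono
    fun N h => by rwa [rpow_natCast] at h

lemma frequently_inv_oscWeight_natCast_eq_pow {b : ℝ} (hb : 0 ≤ b) :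
    ∃ᶠ N : ℕ in atTop, (oscWeight b N)⁻¹ = b ^ N :=
  (frequently_natCast_two_pow_sub_one (p := fun x => (oscWeight b x)⁻¹ = b ^ x)
    (j := fun n => 3 + 4 * n) (fun n => by omega) fun n => inv_oscWeight_trough hb n).mono
    fun N h => by rwa [rpow_natCast] at h

lemma not_exists_le_mul_pow_of_frequently_eq_pow {a r : ℝ} (hr : 0 < r) (hra : r < a)
    {v : ℕ → ℝ} (hv : ∃ᶠ N in atTop, v N = a ^ N) : ¬ ∃ M, ∀ N, v N ≤ M * r ^ N := by
  rintro ⟨M, hM⟩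
  have har : 1 < a / r := (one_lt_div hr).2 hra
  obtain ⟨n, hn⟩ := pow_unbounded_of_one_lt M har
  obtain ⟨N, hnN, hvN⟩ := frequently_atTop.1 hv n
  have hMN : M < (a / r) ^ N := hn.trans_le (pow_le_pow_right₀ har.le hnN)
  have hvM := hM N
  rw [div_pow, lt_div_iff₀ (pow_pos hr N)] at hMN
  linarith

/-- For the weights `u n = (c+2) ^ (|n|·sin((π/2)·log₂(1+|n|)))` and
`n_k = 2^(1+4k) − 1`, `m_k = 2^(3+4k) − 1` (`k ≥ 1`), one has
`u (±n_k) = (c+2)^(n_k)` and `u (±m_k)⁻¹ = (c+2)^(m_k)`; consequently no bound of the form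
`u (±N)^(±1) ≤ M'·(c+1)^N` (for all `N ∈ ℕ`) can hold. -/
theorem stmt11 (c : ℝ) (hc : 0 < c)
    (u : ℤ → ℝ)
    (hu : ∀ n : ℤ,
      u n = (c + 2) ^ (|(n : ℝ)| * Real.sin (Real.pi / 2 * Real.logb 2 (1 + |(n : ℝ)|)))) :
    (∀ k : ℕ, 1 ≤ k →
      u ((2 ^ (1 + 4 * k) - 1 : ℤ)) = (c + 2) ^ ((2 : ℝ) ^ (1 + 4 * k) - 1) ∧
      u (-(2 ^ (1 + 4 * k) - 1 : ℤ)) = (c + 2) ^ ((2 : ℝ) ^ (1 + 4 * k) - 1) ∧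
      (u ((2 ^ (3 + 4 * k) - 1 : ℤ)))⁻¹ = (c + 2) ^ ((2 : ℝ) ^ (3 + 4 * k) - 1) ∧
      (u (-(2 ^ (3 + 4 * k) - 1 : ℤ)))⁻¹ = (c + 2) ^ ((2 : ℝ) ^ (3 + 4 * k) - 1)) ∧
    (¬ ∃ M' : ℝ, 0 ≤ M' ∧ ∀ N : ℕ, u (N : ℤ) ≤ M' * (c + 1) ^ N) ∧
    (¬ ∃ M' : ℝ, 0 ≤ M' ∧ ∀ N : ℕ, (u (N : ℤ))⁻¹ ≤ M' * (c + 1) ^ N) ∧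
    (¬ ∃ M' : ℝ, 0 ≤ M' ∧ ∀ N : ℕ, u (-(N : ℤ)) ≤ M' * (c + 1) ^ N) ∧
    (¬ ∃ M' : ℝ, 0 ≤ M' ∧ ∀ N : ℕ, (u (-(N : ℤ)))⁻¹ ≤ M' * (c + 1) ^ N) := by
  have hu (n : ℤ) : u n = oscWeight (c + 2) n := hu n
  have hb : 0 ≤ c + 2 := by linarith
  have hpos : 0 < c + 1 := by linarith
  have hlt : c + 1 < c + 2 := by linarith
  have unbounded {v : ℕ → ℝ} (hv : ∃ᶠ N in atTop, v N = (c + 2) ^ N) :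
      ¬ ∃ M' : ℝ, 0 ≤ M' ∧ ∀ N : ℕ, v N ≤ M' * (c + 1) ^ N := fun ⟨M', _, hM'⟩ =>
    not_exists_le_mul_pow_of_frequently_eq_pow hpos hlt hv ⟨M', hM'⟩
  simp only [hu, Int.cast_neg, Int.cast_sub, Int.cast_pow, Int.cast_ofNat, Int.cast_one,
    Int.cast_natCast, oscWeight_neg]
  exact ⟨fun k _ => ⟨oscWeight_peak _ k, oscWeight_peak _ k, inv_oscWeight_trough hb k,
    inv_oscWeight_trough hb k⟩, unbounded (frequently_oscWeight_natCast_eq_pow _),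
    unbounded (frequently_inv_oscWeight_natCast_eq_pow hb),
    unbounded (frequently_oscWeight_natCast_eq_pow _),
    unbounded (frequently_inv_oscWeight_natCast_eq_pow hb)⟩
end
end

section
/- Let (u_n)_{n∈ℤ} be a two-sided sequence of nonzero complex numbers with bounded ratios |u_{n+1}/u_n|, and let U be the bounded operator on ℓ²(ℤ,ℂ) with (Uf)(n) = (u_n/u_{n−1})·f(n−1). If there exist f ∈ ℓ²(ℤ,ℂ) with f ≠ 0 and constants M, a > 0 such that ‖U^N f‖ ≤ M·a^N for all N ∈ ℕ, then there exists M' > 0 such that |u_N| ≤ M'·a^N for all N ∈ ℕ. -/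
noncomputable section

/-- For a weighted bilateral shift `U` with nonzero weights `u` of bounded ratios: if some
nonzero `f` satisfies `‖U^N f‖ ≤ M·a^N` for all `N ∈ ℕ`, then there is `M' > 0` with
`|u_N| ≤ M'·a^N` for all `N ∈ ℕ`. -/
theorem stmt12 (u : ℤ → ℂ) (hu0 : ∀ n : ℤ, u n ≠ 0)
    (B : ℝ) (hB : ∀ n : ℤ, ‖u (n + 1) / u n‖ ≤ B)
    (U : l2 →L[ℂ] l2)
    (hU : ∀ (f : l2) (n : ℤ), U f n = u n / u (n - 1) * f (n - 1))
    (f : l2) (hf : f ≠ 0) (M a : ℝ) (hM : 0 < M) (ha : 0 < a)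
    (hbound : ∀ N : ℕ, ‖(U ^ N) f‖ ≤ M * a ^ N) :
    ∃ M' : ℝ, 0 < M' ∧ ∀ N : ℕ, ‖u (N : ℤ)‖ ≤ M' * a ^ N := by
  -- pick a nonzero coordinate of f
  have hex : ∃ n : ℤ, f n ≠ 0 := by
    by_contra h
    push_neg at h
    exact hf (lp.ext (funext h))
  obtain ⟨n₀, hn₀⟩ := hex
  -- formula for powers of U
  have hpow : ∀ (N : ℕ) (n : ℤ), ((U ^ N) f) n = u n / u (n - N) * f (n - N) := by
    intro N
    induction N with
    | zero => intro n; simp [div_self (hu0 n)]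
    | succ N ih =>
      intro n
      have : (U ^ (N + 1)) f = U ((U ^ N) f) := by
        rw [pow_succ', ContinuousLinearMap.mul_apply]
      rw [this, hU, ih]
      have h1 : n - 1 - (N : ℤ) = n - (N + 1 : ℕ) := by push_cast; ring
      rw [h1, ← mul_assoc, div_mul_div_cancel₀ (hu0 (n - 1))]
  -- key estimate: ‖u (n₀ + k)‖ ≤ C * a ^ k
  set C : ℝ := M * ‖u n₀‖ / ‖f n₀‖ with hC
  have hfn₀ : (0:ℝ) < ‖f n₀‖ := norm_pos_iff.mpr hn₀
  have hun₀ : (0:ℝ) < ‖u n₀‖ := norm_pos_iff.mpr (hu0 n₀)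
  have hCpos : 0 < C := div_pos (mul_pos hM hun₀) hfn₀
  have key : ∀ k : ℕ, ‖u (n₀ + k)‖ ≤ C * a ^ k := by
    intro k
    have h1 : ‖((U ^ k) f) (n₀ + k)‖ ≤ ‖(U ^ k) f‖ :=
      lp.norm_apply_le_norm (by norm_num) _ _
    rw [hpow k (n₀ + k)] at h1
    have h2 : n₀ + (k:ℤ) - k = n₀ := by ring
    rw [h2] at h1
    have h3 : ‖u (n₀ + k) / u n₀ * f n₀‖ = ‖u (n₀ + k)‖ / ‖u n₀‖ * ‖f n₀‖ := by
      rw [norm_mul, norm_div]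
    rw [h3] at h1
    have h4 := h1.trans (hbound k)
    rw [div_mul_eq_mul_div, div_le_iff₀ hun₀] at h4
    rw [hC, div_mul_eq_mul_div, le_div_iff₀ hfn₀]
    nlinarith
  -- assemble M'
  set S : ℝ := ∑ j ∈ Finset.range n₀.toNat, ‖u (j : ℤ)‖ / a ^ j with hS
  have hSnn : 0 ≤ S := Finset.sum_nonneg fun j _ => by positivity
  refine ⟨C * a ^ (-n₀) + S, add_pos_of_pos_of_nonneg (mul_pos hCpos (zpow_pos ha _)) hSnn, ?_⟩
  intro N
  by_cases hN : n₀ ≤ (N : ℤ)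
  · -- N ≥ n₀ : use key with k = (N - n₀).toNat
    set k : ℕ := ((N : ℤ) - n₀).toNat with hk
    have hkz : (k : ℤ) = (N : ℤ) - n₀ := Int.toNat_of_nonneg (by omega)
    have h1 : n₀ + (k : ℤ) = (N : ℤ) := by omega
    have h2 := key k
    rw [h1] at h2
    have h3 : (a : ℝ) ^ k = a ^ (-n₀) * a ^ N := by
      have : ((a : ℝ) ^ k : ℝ) = a ^ ((k : ℤ)) := by rw [zpow_natCast]
      rw [this, hkz, sub_eq_add_neg, add_comm, zpow_add₀ (ne_of_gt ha), zpow_natCast]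
    calc ‖u (N : ℤ)‖ ≤ C * a ^ k := h2
      _ = C * a ^ (-n₀) * a ^ N := by rw [h3]; ring
      _ ≤ (C * a ^ (-n₀) + S) * a ^ N := by
          have : (0:ℝ) ≤ a ^ N := by positivity
          nlinarith
  · -- N < n₀ : use the finite sum bound
    push_neg at hN
    have hmem : N ∈ Finset.range n₀.toNat := by
      rw [Finset.mem_range]; omega
    have h1 : ‖u (N : ℤ)‖ / a ^ N ≤ S :=
      Finset.single_le_sum (f := fun j : ℕ => ‖u (j : ℤ)‖ / a ^ j)
        (fun j _ => by positivity) hmem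
    have h2 : ‖u (N : ℤ)‖ ≤ S * a ^ N := by
      rw [div_le_iff₀ (by positivity)] at h1; linarith
    calc ‖u (N : ℤ)‖ ≤ S * a ^ N := h2
      _ ≤ (C * a ^ (-n₀) + S) * a ^ N := by
          have h3 : (0:ℝ) < C * a ^ (-n₀) := by positivity
          nlinarith [pow_pos ha N]
end
end

section
/- Fix c ≥ 1 and set v_n := (2c)^{−|n|} for n ∈ ℤ. Let V be the bounded invertible operator on ℓ²(ℤ,ℂ) with (Vf)(n) = (v_n/v_{n−1})·f(n−1). Then the spectral radius of V equals 2c and the spectral radius of V⁻¹ equals 2c. -/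
/-! A weighted shift `T` maps each basis vector `e_m` to a multiple of `e_(m-d)`, so the weights of
`T ^ N` telescope and `‖T ^ N‖` is the supremum of `|u (m - N d) / u m|`. For the weights
`(2c)^(-|n|)` and `d = ±1` this supremum is exactly `(2c)^N`, attained at the basis vector sent to
`e₀`; Gelfand's formula then gives the spectral radius. The inverse of a weighted shift is the
weighted shift in the opposite direction, with the same weights. -/

noncomputable section
open Real
open scoped ENNReal

open Filter in
theorem spectralRadius_eq_of_norm_pow_eq {A : Type*} [NormedRing A] [NormedAlgebra ℂ A]
    [CompleteSpace A] {a : A} {C : ℝ} (h : ∀ N : ℕ, 1 ≤ N → ‖a ^ N‖ = C ^ N) :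
    spectralRadius ℂ a = ENNReal.ofReal C := by
  have hC : 0 ≤ C := by
    rw [← pow_one C, ← h 1 le_rfl]
    exact norm_nonneg _
  refine tendsto_nhds_unique (spectrum.pow_norm_pow_one_div_tendsto_nhds_spectralRadius a) ?_
  refine tendsto_const_nhds.congr' ?_
  filter_upwards [eventually_ge_atTop 1] with N hN
  rw [h N hN, ← Real.rpow_natCast, ← Real.rpow_mul hC, mul_one_div_cancel (by positivity),
    Real.rpow_one]

/-- The weight at `n` is written as the ratio `u n / u (n + d)`, so that the weights of the
powers of `T` telescope. -/
def IsWeightedShift {p : ℝ≥0∞} [Fact (1 ≤ p)]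
    (T : lp (fun _ : ℤ => ℂ) p →L[ℂ] lp (fun _ : ℤ => ℂ) p) (u : ℤ → ℝ) (d : ℤ) : Prop :=
  ∀ f n, T f n = ((u n / u (n + d) : ℝ) : ℂ) * f (n + d)

namespace IsWeightedShift

variable {p : ℝ≥0∞} [Fact (1 ≤ p)] {T : lp (fun _ : ℤ => ℂ) p →L[ℂ] lp (fun _ : ℤ => ℂ) p}
  {u : ℤ → ℝ} {d : ℤ} {C : ℝ}

theorem apply_single (hT : IsWeightedShift T u d) (k : ℤ) :
    T (lp.single p k 1) = ((u (k - d) / u k : ℝ) : ℂ) • lp.single p (k - d) 1 := by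
  ext n
  rw [hT, lp.coeFn_smul, Pi.smul_apply]
  by_cases h : n = k - d
  · subst h
    simp
  · have h' : n + d ≠ k := fun h'' => h (by omega)
    rw [lp.single_apply_ne _ _ _ h', lp.single_apply_ne _ _ _ h, mul_zero, smul_zero]

theorem pow_apply_single (hT : IsWeightedShift T u d) (hu : ∀ n, u n ≠ 0) (N : ℕ) (m : ℤ) :
    (T ^ N) (lp.single p m 1) = ((u (m - N * d) / u m : ℝ) : ℂ) • lp.single p (m - N * d) 1 := by
  induction N with
  | zero => simp [div_self (hu m)]
  | succ N ih =>
    rw [pow_succ', mul_apply_eq_comp, ih, map_smul, hT.apply_single, smul_smul,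
      show m - ((N + 1 : ℕ) : ℤ) * d = m - N * d - d by push_cast; ring, ← Complex.ofReal_mul, mul_comm, div_mul_div_cancel₀ (hu _)]

theorem norm_le (hT : IsWeightedShift T u d) (hp : p ≠ ∞) (hb : ∀ n, |u n / u (n + d)| ≤ C) :
    ‖T‖ ≤ C := by
  have hC : 0 ≤ C := (abs_nonneg _).trans (hb 0)
  have hp' : 0 < p.toReal := ENNReal.toReal_pos (zero_lt_one.trans_le Fact.out).ne' hp
  refine T.opNorm_le_bound hC fun f => lp.norm_le_of_tsum_le hp' (by positivity) ?_
  have hf_shift : Summable fun n => ‖f (n + d)‖ ^ p.toReal :=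
    (Equiv.addRight d).summable_iff.mpr ((lp.memℓp f).summable hp')
  have hf_shift_tsum : ∑' n, ‖f (n + d)‖ ^ p.toReal = ‖f‖ ^ p.toReal := by
    rw [lp.norm_rpow_eq_tsum hp']
    exact (Equiv.addRight d).tsum_eq fun n => ‖f n‖ ^ p.toReal
  have hle (n : ℤ) : ‖T f n‖ ^ p.toReal ≤ C ^ p.toReal * ‖f (n + d)‖ ^ p.toReal := by
    rw [← mul_rpow hC (norm_nonneg _), hT, norm_mul, Complex.norm_real, Real.norm_eq_abs]
    gcongr
    exact hb n
  calc ∑' n, ‖T f n‖ ^ p.toReal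
      ≤ ∑' n, C ^ p.toReal * ‖f (n + d)‖ ^ p.toReal :=
        ((lp.memℓp (T f)).summable hp').tsum_le_tsum hle (hf_shift.mul_left _)
    _ = C ^ p.toReal * ‖f‖ ^ p.toReal := by
        rw [tsum_mul_left, hf_shift_tsum]
    _ = (C * ‖f‖) ^ p.toReal := (mul_rpow hC (norm_nonneg f)).symm

theorem norm_pow_eq (hT : IsWeightedShift T u d) (hp : p ≠ ∞) (hu : ∀ n, u n ≠ 0)
    (hb : ∀ n, |u n / u (n + d)| ≤ C) (hs : ∀ N : ℕ, ∃ m, C ^ N ≤ |u (m - N * d) / u m|)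
    {N : ℕ} (hN : 1 ≤ N) : ‖T ^ N‖ = C ^ N := by
  refine le_antisymm ((norm_pow_le' T hN).trans ?_) ?_
  · exact pow_le_pow_left₀ (norm_nonneg T) (hT.norm_le hp hb) N
  · obtain ⟨m, hm⟩ := hs N
    have h := (T ^ N).le_opNorm (lp.single p m 1)
    have hp0 : 0 < p := zero_lt_one.trans_le Fact.out
    simp only [hT.pow_apply_single hu, norm_smul, Complex.norm_real, Real.norm_eq_abs,
      lp.norm_single hp0, norm_one, mul_one] at h
    exact hm.trans h

theorem spectralRadius_eq (hT : IsWeightedShift T u d) (hp : p ≠ ∞) (hu : ∀ n, u n ≠ 0)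
    (hb : ∀ n, |u n / u (n + d)| ≤ C) (hs : ∀ N : ℕ, ∃ m, C ^ N ≤ |u (m - N * d) / u m|) :
    spectralRadius ℂ T = ENNReal.ofReal C :=
  spectralRadius_eq_of_norm_pow_eq fun _ hN => hT.norm_pow_eq hp hu hb hs hN

theorem inv {V : (lp (fun _ : ℤ => ℂ) p →L[ℂ] lp (fun _ : ℤ => ℂ) p)ˣ}
    (hV : IsWeightedShift (V : lp (fun _ : ℤ => ℂ) p →L[ℂ] lp (fun _ : ℤ => ℂ) p) u d)
    (hu : ∀ n, u n ≠ 0) :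
    IsWeightedShift (V⁻¹ : (lp (fun _ : ℤ => ℂ) p →L[ℂ] lp (fun _ : ℤ => ℂ) p)ˣ).val u (-d) := by
  intro g n
  have h := hV (V⁻¹.val g) (n - d)
  rw [sub_add_cancel, ← mul_apply_eq_comp, Units.mul_inv, one_apply_eq_self] at h
  rw [← sub_eq_add_neg, h, ← mul_assoc, ← Complex.ofReal_mul,
    div_mul_div_cancel₀ (hu _), div_self (hu n), Complex.ofReal_one, one_mul]

theorem spectralRadius_eq_of_rpow_neg_abs (hT : IsWeightedShift T u d) (hp : p ≠ ∞) {b : ℝ}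
    (hb : 1 ≤ b) (hu : ∀ n, u n = b ^ (-|(n : ℝ)|)) (hd : |d| = 1) :
    spectralRadius ℂ T = ENNReal.ofReal b := by
  have hb0 : 0 < b := zero_lt_one.trans_le hb
  have hratio (n m : ℤ) : |u n / u m| = b ^ (|(m : ℝ)| - |(n : ℝ)|) := by
    rw [hu, hu, ← Real.rpow_sub hb0, neg_sub_neg, abs_of_pos (Real.rpow_pos_of_pos hb0 _)]
  have hd' : |(d : ℝ)| = 1 := by exact_mod_cast hd
  refine hT.spectralRadius_eq hp (fun n => hu n ▸ (Real.rpow_pos_of_pos hb0 _).ne') (fun n => ?_)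
    (fun N => ⟨N * d, ?_⟩)
  · rw [hratio]
    refine (Real.rpow_le_rpow_of_exponent_le hb ?_).trans_eq (Real.rpow_one b)
    push_cast
    linarith [abs_add_le (n : ℝ) d]
  · rw [sub_self, hratio]
    push_cast
    rw [abs_zero, sub_zero, abs_mul, hd', Nat.abs_cast, mul_one, Real.rpow_natCast]

end IsWeightedShift

/-- For the weighted bilateral shift `V` with weights `v n = (2c)^(−|n|)` (`c ≥ 1`), the
spectral radii of `V` and of `V⁻¹` both equal `2c`. -/
theorem stmt14 (c : ℝ) (hc : 1 ≤ c)
    (v : ℤ → ℝ) (hv : ∀ n : ℤ, v n = (2 * c) ^ (-|(n : ℝ)|))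
    (V : (l2 →L[ℂ] l2)ˣ)
    (hV : ∀ (f : l2) (n : ℤ),
      (V : l2 →L[ℂ] l2) f n = ((v n / v (n - 1) : ℝ) : ℂ) * f (n - 1)) :
    spectralRadius ℂ (V : l2 →L[ℂ] l2) = ENNReal.ofReal (2 * c) ∧
    spectralRadius ℂ ((V⁻¹ : (l2 →L[ℂ] l2)ˣ) : l2 →L[ℂ] l2) = ENNReal.ofReal (2 * c) := by
  have h2c : 1 ≤ 2 * c := by linarith
  have hV' : IsWeightedShift (V : l2 →L[ℂ] l2) v (-1) := fun f n => by
    rw [← sub_eq_add_neg, hV]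
  have hVinv : IsWeightedShift ((V⁻¹ : (l2 →L[ℂ] l2)ˣ) : l2 →L[ℂ] l2) v 1 := by
    simpa using hV'.inv fun n => hv n ▸ (Real.rpow_pos_of_pos (by linarith) _).ne'
  exact ⟨hV'.spectralRadius_eq_of_rpow_neg_abs ENNReal.ofNat_ne_top h2c hv (by simp),
    hVinv.spectralRadius_eq_of_rpow_neg_abs ENNReal.ofNat_ne_top h2c hv (by simp)⟩
end
end
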